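/- For every integer n ≥ 2, every γ with 1 < γ ≤ 2, and every p ∈ (0,1): (i) θ_{n,γ}(p) ≤ p^{γ−1} + (γ−1) p^{γ−2} (1−p)/n, and (ii) β_{n,γ}(p)^{1/γ} < p + ((γ−1)/(γ n))·(1−p). -/

import Mathlib

open MeasureTheory Real Finset

/-- `theta n γ p = E[(n/N(p))^{1-γ}]` where `N(p)-1 ~ Bin(n-1,p)`. -/
noncomputable def theta (n : ℕ) (γ p : ℝ) : ℝ :=
  ∑ k ∈ Finset.range n,
    ((n - 1).choose k : ℝ) * p ^ k * (1 - p) ^ (n - 1 - k) *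
      ((n : ℝ) / ((k : ℝ) + 1)) ^ (1 - γ)

/-- `beta n γ p = p * theta n γ p`. -/
noncomputable def beta (n : ℕ) (γ p : ℝ) : ℝ := p * theta n γ p

/-- Optimal tontine payout function. -/
noncomputable def Dopt (n : ℕ) (γ r : ℝ) (p : ℝ → ℝ) (t : ℝ) : ℝ :=
  beta n γ (p t) ^ (1 / γ) /
    ∫ s in Set.Ioi (0 : ℝ), Real.exp (-r * s) * beta n γ (p s) ^ (1 / γ)

/-- Cumulative discounted payout of the optimal tontine. -/
noncomputable def Delta (n : ℕ) (γ r : ℝ) (p : ℝ → ℝ) (t : ℝ) : ℝ :=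
  ∫ s in (0 : ℝ)..t, Real.exp (-r * s) * Dopt n γ r p s

/-!
`θ_{n,γ}(p)` is the mean of `(N/n)^{γ-1}` with `N - 1 ~ Bin(n-1, p)`, so Jensen's inequality for
the concave power `x ↦ x^{γ-1}` (`0 < γ - 1 ≤ 1`) bounds it by `q^{γ-1}`, where
`q = E[N]/n = p + (1-p)/n`; the tangent line of that power at `p` then gives (i). For (ii),
`β^{1/γ} ≤ p^{1/γ} q^{(γ-1)/γ}`, and this weighted geometric mean lies strictly below the
weighted arithmetic mean `p/γ + (γ-1)q/γ` because `p < q`.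
-/

open Polynomial in
lemma sum_eval_bernsteinPolynomial (m : ℕ) (p : ℝ) :
    ∑ k ∈ range (m + 1), (bernsteinPolynomial ℝ m k).eval p = 1 := by
  simpa [eval_finsetSum] using congrArg (eval p) (bernsteinPolynomial.sum ℝ m)

open Polynomial in
lemma sum_eval_bernsteinPolynomial_mul_self (m : ℕ) (p : ℝ) :
    ∑ k ∈ range (m + 1), (bernsteinPolynomial ℝ m k).eval p * k = m * p := by
  have := congrArg (eval p) (bernsteinPolynomial.sum_smul ℝ m)
  simpa [eval_finsetSum, mul_comm] using this

lemma eval_bernsteinPolynomial_nonneg (m k : ℕ) {p : ℝ} (hp0 : 0 ≤ p) (hp1 : p ≤ 1) :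
    0 ≤ (bernsteinPolynomial ℝ m k).eval p := by
  simp only [bernsteinPolynomial, Polynomial.eval_mul, Polynomial.eval_pow, Polynomial.eval_sub,
    Polynomial.eval_one, Polynomial.eval_X, Polynomial.eval_natCast]
  have : 0 ≤ 1 - p := by linarith
  positivity

lemma theta_eq_sum_bernstein (m : ℕ) (γ p : ℝ) :
    theta (m + 1) γ p = ∑ k ∈ range (m + 1),
      (bernsteinPolynomial ℝ m k).eval p * (((k : ℝ) + 1) / (m + 1)) ^ (γ - 1) := by
  refine sum_congr rfl fun k _ => ?_
  rw [show 1 - γ = -(γ - 1) by ring, rpow_neg (by positivity), ← inv_rpow (by positivity),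
    inv_div]
  simp [bernsteinPolynomial]

lemma theta_nonneg (n : ℕ) (γ : ℝ) {p : ℝ} (hp0 : 0 ≤ p) (hp1 : p ≤ 1) :
    0 ≤ theta n γ p := by
  have : 0 ≤ 1 - p := by linarith
  unfold theta
  positivity

lemma theta_le_rpow {n : ℕ} (hn : 0 < n) {γ p : ℝ} (hγ1 : 1 ≤ γ) (hγ2 : γ ≤ 2)
    (hp0 : 0 ≤ p) (hp1 : p ≤ 1) : theta n γ p ≤ (p + (1 - p) / n) ^ (γ - 1) := by
  obtain ⟨m, rfl⟩ : ∃ m, n = m + 1 := ⟨n - 1, by omega⟩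
  have hmean : ∑ k ∈ range (m + 1),
      (bernsteinPolynomial ℝ m k).eval p * (((k : ℝ) + 1) / (m + 1)) =
        p + (1 - p) / (m + 1 : ℕ) := by
    simp only [mul_div_assoc', ← sum_div, mul_add, mul_one, sum_add_distrib,
      sum_eval_bernsteinPolynomial_mul_self, sum_eval_bernsteinPolynomial]
    push_cast
    field_simp
    ring
  rw [theta_eq_sum_bernstein, ← hmean]
  simpa only [smul_eq_mul] using (concaveOn_rpow (by linarith) (by linarith)).le_map_sum
    (fun k _ => eval_bernsteinPolynomial_nonneg m k hp0 hp1) (sum_eval_bernsteinPolynomial m p)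
    (fun k _ => Set.mem_Ici.2 (by positivity))

lemma rpow_add_le_rpow_add_mul_rpow_sub_one {x h s : ℝ} (hx : 0 < x) (hh : -x ≤ h)
    (hs0 : 0 ≤ s) (hs1 : s ≤ 1) : (x + h) ^ s ≤ x ^ s + s * x ^ (s - 1) * h := by
  have hhx : -1 ≤ h / x := by rw [le_div_iff₀ hx]; linarith
  have hbern : (1 + h / x) ^ s ≤ 1 + s * (h / x) := rpow_one_add_le_one_add_mul_self hhx hs0 hs1
  calc (x + h) ^ s = x ^ s * (1 + h / x) ^ s := by
        rw [← mul_rpow hx.le (by linarith), mul_add, mul_one, mul_div_cancel₀ _ hx.ne']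
    _ ≤ x ^ s * (1 + s * (h / x)) := mul_le_mul_of_nonneg_left hbern (by positivity)
    _ = x ^ s + s * x ^ (s - 1) * h := by rw [rpow_sub_one hx.ne']; field_simp

lemma mul_rpow_sub_one_rpow_one_div_lt {x y γ : ℝ} (hx : 0 < x) (hxy : x < y) (hγ : 1 < γ) :
    (x * y ^ (γ - 1)) ^ (1 / γ) < x + (γ - 1) / γ * (y - x) := by
  have hy : 0 < y := hx.trans hxy
  have hγ0 : 0 < γ := by linarith
  calc (x * y ^ (γ - 1)) ^ (1 / γ) = x ^ (1 / γ) * y ^ ((γ - 1) / γ) := by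
        rw [mul_rpow hx.le (by positivity), ← rpow_mul hy.le, mul_one_div]
    _ < 1 / γ * x + (γ - 1) / γ * y :=
        (geom_mean_lt_arith_mean2_weighted_iff_of_pos (by positivity) (div_pos (by linarith) hγ0)
          hx.le hy.le (by field_simp; ring)).2 hxy.ne
    _ = x + (γ - 1) / γ * (y - x) := by field_simp; ring

/-- for `1 < γ ≤ 2` and `0 < p < 1`,
`θ_{n,γ}(p) ≤ p^{γ-1} + (γ-1) p^{γ-2} (1-p)/n` and
`β_{n,γ}(p)^{1/γ} < p + ((γ-1)/(γ n)) (1-p)`. -/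
theorem theta_beta_tangent_bounds
    (n : ℕ) (hn : 2 ≤ n) (γ : ℝ) (hγ1 : 1 < γ) (hγ2 : γ ≤ 2)
    (p : ℝ) (hp : p ∈ Set.Ioo (0 : ℝ) 1) :
    theta n γ p ≤ p ^ (γ - 1) + (γ - 1) * p ^ (γ - 2) * (1 - p) / n ∧
    (beta n γ p) ^ (1 / γ) < p + (γ - 1) / (γ * n) * (1 - p) := by
  obtain ⟨hp0, hp1⟩ := hp
  have hn0 : (0 : ℝ) < n := by positivity
  have hgap : 0 < (1 - p) / n := div_pos (by linarith) hn0
  have hθ := theta_le_rpow (by omega : 0 < n) hγ1.le hγ2 hp0.le hp1.le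
  refine ⟨hθ.trans ?_, ?_⟩
  · have := rpow_add_le_rpow_add_mul_rpow_sub_one hp0 (by linarith) (by linarith) (by linarith)
      (h := (1 - p) / n) (s := γ - 1)
    rwa [sub_sub, one_add_one_eq_two, ← mul_div_assoc] at this
  · calc beta n γ p ^ (1 / γ) ≤ (p * (p + (1 - p) / n) ^ (γ - 1)) ^ (1 / γ) :=
          rpow_le_rpow (mul_nonneg hp0.le (theta_nonneg n γ hp0.le hp1.le))
            (mul_le_mul_of_nonneg_left hθ hp0.le) (by positivity)
      _ < p + (γ - 1) / γ * (p + (1 - p) / n - p) :=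
          mul_rpow_sub_one_rpow_one_div_lt hp0 (by linarith) hγ1
      _ = p + (γ - 1) / (γ * n) * (1 - p) := by field_simp; ring
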